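/- Let C be a Grothendieck category with a generator G that is κ(G)-presentable, and (U,θ,η) a monad on C with U exact and colimit-preserving. Then the Eilenberg-Moore category EM_U is locally κ(G)-presentable. -/

import Mathlib

open CategoryTheory CategoryTheory.Limits Opposite

universe w v u u₂ v₂

namespace Paper

variable {C : Type u} [Category.{v} C]

/-- A partially ordered set `J` is `κ`-directed if every subset of cardinality `< κ`
has an upper bound. -/
def IsKappaDirected (κ : Cardinal.{v}) (J : Type v) [Preorder J] : Prop :=
  ∀ S : Set J, Cardinal.mk S < κ → ∃ j : J, ∀ s ∈ S, s ≤ j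

/-- An object `M` is `κ`-presentable if `C(M,-)` preserves colimits of
`κ`-directed diagrams. -/
def IsPresentable (κ : Cardinal.{v}) (M : C) : Prop :=
  ∀ (J : Type v) [PartialOrder J], IsKappaDirected κ J →
    PreservesColimitsOfShape J (coyoneda.obj (op M))

/-- A category is locally `κ`-presentable if it is cocomplete and has a small
separating family of `κ`-presentable objects. -/
def IsLocallyKappaPresentable (κ : Cardinal.{v₂}) (A : Type u₂) [Category.{v₂} A] : Prop :=
  ∃ (_ : HasColimits A) (S : Set A), Small.{v₂} S ∧ (∀ M ∈ S, IsPresentable κ M) ∧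
    ObjectProperty.IsSeparating S

/-- A category is locally presentable if it is locally `κ`-presentable for some
regular cardinal `κ`. -/
def IsLocallyPresentable (A : Type u₂) [Category.{v₂} A] : Prop :=
  ∃ κ : Cardinal.{v₂}, κ.IsRegular ∧ IsLocallyKappaPresentable κ A

/-- Filtered colimits exist when all colimits do. -/
def hasFilteredOfHasColimits {A : Type u₂} [Category.{v₂} A] (hc : HasColimits A) :
    HasFilteredColimits A :=
  ⟨fun I _ _ => hc.has_colimits_of_shape I⟩

/-- A Grothendieck category: abelian, cocomplete, AB5, with a generator. -/
def IsGrothendieckCategory (A : Type u₂) [Category.{v₂} A] : Prop :=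
  ∃ (_ : Abelian A) (hc : HasColimits A),
    @AB5 A _ (hasFilteredOfHasColimits hc) ∧ ∃ G : A, IsSeparator G

section MonadQuiver

variable {Q : Type v} [SmallCategory Q] (𝒰 : Q ⥤ Monad C)

/-- A module over a monad quiver `𝒰 : Q ⥤ Mnd(C)`: a family of Eilenberg-Moore
algebras `pt x ∈ EM_{𝒰 x}` together with compatible structure morphisms
`pt x ⟶ (𝒰 φ)_* (pt y)` for each arrow `φ : x ⟶ y`. -/
structure UMod where
  pt : ∀ x : Q, (𝒰.obj x).Algebra
  tr : ∀ {x y : Q}, (x ⟶ y) → ((pt x).A ⟶ (pt y).A)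
  compat : ∀ {x y : Q} (φ : x ⟶ y),
    (𝒰.obj x).toFunctor.map (tr φ) ≫ ((𝒰.map φ).app (pt y).A ≫ (pt y).a) =
      (pt x).a ≫ tr φ
  tr_id : ∀ x : Q, tr (𝟙 x) = 𝟙 (pt x).A
  tr_comp : ∀ {x y z : Q} (φ : x ⟶ y) (ψ : y ⟶ z), tr (φ ≫ ψ) = tr φ ≫ tr ψ

variable {𝒰}

/-- Morphisms of modules over a monad quiver. -/
structure UModHom (M N : UMod 𝒰) where
  app : ∀ x : Q, (M.pt x).A ⟶ (N.pt x).A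
  halg : ∀ x : Q,
    (𝒰.obj x).toFunctor.map (app x) ≫ (N.pt x).a = (M.pt x).a ≫ app x
  hcomm : ∀ {x y : Q} (φ : x ⟶ y), M.tr φ ≫ app y = app x ≫ N.tr φ

theorem UModHom.ext' {M N : UMod 𝒰} {f g : UModHom M N} (h : f.app = g.app) : f = g := by
  cases f; cases g; cases h; rfl

instance : Category (UMod 𝒰) where
  Hom := UModHom
  id M :=
    { app := fun x => 𝟙 _
      halg := fun x => by simp
      hcomm := fun φ => by simp }
  comp {M N P} f g :=
    { app := fun x => f.app x ≫ g.app x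
      halg := fun x => by
        rw [Functor.map_comp, Category.assoc, g.halg x, ← Category.assoc, f.halg x,
          Category.assoc]
      hcomm := fun φ => by
        rw [← Category.assoc, f.hcomm φ, Category.assoc, g.hcomm φ, ← Category.assoc] }
  id_comp f := UModHom.ext' (by funext x; exact Category.id_comp _)
  comp_id f := UModHom.ext' (by funext x; exact Category.comp_id _)
  assoc f g h := UModHom.ext' (by funext x; exact Category.assoc _ _ _)

variable (𝒰)

/-- Evaluation of a `𝒰`-module at a vertex `x`. -/
def ev (x : Q) : UMod 𝒰 ⥤ (𝒰.obj x).Algebra where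
  obj M := M.pt x
  map f := { f := f.app x, h := f.halg x }
  map_id _ := rfl
  map_comp _ _ := rfl

variable {𝒰}

/-- The structure morphism of a module, as a morphism `pt x ⟶ φ_* (pt y)` of
Eilenberg-Moore algebras. -/
def UMod.trHom (M : UMod 𝒰) {x y : Q} (φ : x ⟶ y) :
    M.pt x ⟶ (Monad.algebraFunctorOfMonadHom (𝒰.map φ)).obj (M.pt y) :=
  { f := M.tr φ
    h := M.compat φ }

/-- `M` is cartesian at the edge `φ : x ⟶ y` if the structure morphism
`pt x ⟶ φ_* (pt y)` is a universal arrow; equivalently the adjoint transpose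
`φ^* (pt x) ⟶ pt y` is an isomorphism. -/
def IsCartesianAt (M : UMod 𝒰) {x y : Q} (φ : x ⟶ y) : Prop :=
  ∀ (N : (𝒰.obj y).Algebra) (g : M.pt x ⟶ (Monad.algebraFunctorOfMonadHom (𝒰.map φ)).obj N),
    ∃! h : M.pt y ⟶ N,
      M.trHom φ ≫ (Monad.algebraFunctorOfMonadHom (𝒰.map φ)).map h = g

end MonadQuiver

/-- `P` together with `η : M ⟶ φ_* P` is a reflection of `M` along restriction of
scalars, i.e. `η` exhibits `P` as `φ^* M`. -/
def IsExtension {T₁ T₂ : Monad C} (φ : T₁ ⟶ T₂) (M : T₁.Algebra) (P : T₂.Algebra)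
    (η : M ⟶ (Monad.algebraFunctorOfMonadHom φ).obj P) : Prop :=
  ∀ (N : T₂.Algebra) (g : M ⟶ (Monad.algebraFunctorOfMonadHom φ).obj N),
    ∃! h : P ⟶ N, η ≫ (Monad.algebraFunctorOfMonadHom φ).map h = g

/-- A monad morphism `φ` is flat if the left adjoint `φ^*` of the restriction
functor `φ_*` is exact. -/
def IsFlatMonadHom {T₁ T₂ : Monad C} (φ : T₁ ⟶ T₂) : Prop :=
  ∀ (L : T₁.Algebra ⥤ T₂.Algebra),
    Nonempty (L ⊣ Monad.algebraFunctorOfMonadHom φ) → PreservesFiniteLimits L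

section Adjunction

variable {D : Type u₂} [Category.{v} D] {L : C ⥤ D} {R : D ⥤ C}

theorem Adjunction.isPresentable_obj (adj : L ⊣ R) {κ : Cardinal.{v}}
    (hR : ∀ (J : Type v) [PartialOrder J], IsKappaDirected κ J → PreservesColimitsOfShape J R)
    {M : C} (hM : IsPresentable κ M) : IsPresentable κ (L.obj M) := fun J _ hJ =>
  have := hM J hJ
  have := hR J hJ
  let e : coyoneda.obj (op (L.obj M)) ≅ R ⋙ coyoneda.obj (op M) := adj.compCoyonedaIso.app (op M)
  preservesColimitsOfShape_of_natIso e.symm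

theorem Adjunction.isSeparator_obj (adj : L ⊣ R) [R.Faithful] {G : C} (hG : IsSeparator G) :
    IsSeparator (L.obj G) := by
  refine (isSeparator_def _).2 fun X Y f g hfg => R.map_injective <| hG.def _ _ fun k => ?_
  simpa [Adjunction.homEquiv_naturality_right] using
    congrArg (adj.homEquiv G Y) (hfg ((adj.homEquiv G X).symm k))

end Adjunction

theorem em_locallyPresentable_general {C : Type u} [Category.{v} C] [HasColimits C]
    (G : C) (hG : IsSeparator G) (κG : Cardinal.{v})
    (hpres : IsPresentable κG G)
    (T : Monad C) [PreservesColimits T.toFunctor] :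
    IsLocallyKappaPresentable κG T.Algebra := by
  refine ⟨hasColimits_of_hasColimits_createsColimits T.forget, {T.free.obj G},
    small_subsingleton _, ?_, ?_⟩
  · rintro _ rfl
    exact Adjunction.isPresentable_obj T.adj (fun _ _ _ => inferInstance) hpres
  · exact (Adjunction.isSeparator_obj T.adj hG).of_le (ObjectProperty.singleton_le_iff.2 rfl)

/-- the Eilenberg-Moore category of an exact colimit-preserving monad
on a Grothendieck category with a `κ(G)`-presentable generator is locally
`κ(G)`-presentable (Proposition 3.3). -/
theorem em_locallyPresentable {C : Type u} [Category.{v} C] [Abelian C] [HasColimits C] [AB5 C]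
    (G : C) (hG : IsSeparator G) (κG : Cardinal.{v}) (hreg : κG.IsRegular)
    (hpres : IsPresentable κG G)
    (T : Monad C) [PreservesFiniteLimits T.toFunctor] [PreservesColimits T.toFunctor] :
    IsLocallyKappaPresentable κG T.Algebra :=
  em_locallyPresentable_general G hG κG hpres T

end Paper
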